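/- In the fractional-order HK model, the maximum opinion never exceeds its initial value: if x_M(k) = max_i x_i(k), then x_M(k) ≤ x_M(0) for all k ≥ 0. -/

import Mathlib

open Finset Filter Topology

/-- The Grünwald–Letnikov coefficient `a_k^{(α)} = (-1)^k * α(α-1)⋯(α-k+1)/k!`
(with `a_0 = 1`). -/
noncomputable def glCoeff (α : ℝ) (k : ℕ) : ℝ :=
  (-1) ^ k * (∏ i ∈ Finset.range k, (α - (i : ℝ))) / (Nat.factorial k : ℝ)

/-- Neighbor set of agent `i` at time `k` (includes `i` itself). -/
noncomputable def nbr {n : ℕ} (ε : ℝ) (x : ℕ → Fin n → ℝ) (k : ℕ) (i : Fin n) :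
    Finset (Fin n) :=
  Finset.univ.filter (fun j => |x k i - x k j| ≤ ε)

/-- The fractional-order Hegselmann–Krause dynamics. -/
def IsFracHK {n : ℕ} (ε α : ℝ) (x : ℕ → Fin n → ℝ) : Prop :=
  ∀ k i,
    x (k + 1) i =
      (∑ j ∈ (nbr ε x k i).erase i, x k j) / ((nbr ε x k i).card : ℝ) +
        (1 / ((nbr ε x k i).card : ℝ)) *
          ((∑ s ∈ Finset.range k, |glCoeff α (k + 1 - s)| * x s i) +
            (1 - ∑ s ∈ Finset.range k, |glCoeff α (k + 1 - s)|) * x k i)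

/-!
Each new opinion `x_i(k+1)` is a convex combination of earlier opinions: the neighbours at time `k`
get weight `1/|I_i(k)|` each, and the agent's own share `1/|I_i(k)|` is split over its history with
the memory weights `|a_j^{(α)}|` and the remainder `1 - ∑ |a_j^{(α)}|`. That remainder is
nonnegative because `a_0 = 1`, `a_j ≤ 0` for `j ≥ 1`, and the partial sums `∑_{j ≤ m} a_j^{(α)}`
equal the coefficients `a_m^{(α-1)}`, which are nonnegative for `α ≤ 1`. By strong induction,
no opinion ever exceeds the initial maximum.
-/

lemma glCoeff_zero (α : ℝ) : glCoeff α 0 = 1 := by simp [glCoeff]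

lemma glCoeff_succ (α : ℝ) (m : ℕ) :
    glCoeff α (m + 1) = glCoeff α m * ((m - α) / (m + 1)) := by
  have hm : (m.factorial : ℝ) ≠ 0 := by exact_mod_cast m.factorial_ne_zero
  simp only [glCoeff, prod_range_succ, Nat.factorial_succ, pow_succ]
  push_cast
  field_simp
  ring

lemma glCoeff_one (α : ℝ) : glCoeff α 1 = -α := by
  simpa [glCoeff_zero] using glCoeff_succ α 0

lemma glCoeff_succ_eq_glCoeff_sub_one (α : ℝ) (m : ℕ) :
    glCoeff α (m + 1) = glCoeff (α - 1) m * (-α / (m + 1)) := by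
  have hm : (m.factorial : ℝ) ≠ 0 := by exact_mod_cast m.factorial_ne_zero
  have hprod : ∏ i ∈ range (m + 1), (α - i) = (∏ i ∈ range m, (α - 1 - i)) * α := by
    rw [prod_range_succ']
    congr 1
    · exact prod_congr rfl fun j _ => by push_cast; ring
    · simp
  simp only [glCoeff, hprod, Nat.factorial_succ, pow_succ]
  push_cast
  field_simp

lemma sum_range_glCoeff (α : ℝ) (m : ℕ) :
    ∑ j ∈ range (m + 1), glCoeff α j = glCoeff (α - 1) m := by
  induction m with
  | zero => simp [glCoeff_zero]
  | succ m ih =>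
    rw [sum_range_succ, ih, glCoeff_succ_eq_glCoeff_sub_one, glCoeff_succ]
    field_simp
    ring

lemma glCoeff_nonneg {β : ℝ} (hβ : β ≤ 0) (m : ℕ) : 0 ≤ glCoeff β m := by
  induction m with
  | zero => simp [glCoeff_zero]
  | succ m ih =>
    rw [glCoeff_succ]
    exact mul_nonneg ih (div_nonneg (by linarith [m.cast_nonneg (α := ℝ)]) (by positivity))

lemma glCoeff_succ_nonpos {α : ℝ} (hα₀ : 0 ≤ α) (hα₁ : α ≤ 1) (m : ℕ) :
    glCoeff α (m + 1) ≤ 0 := by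
  induction m with
  | zero => rw [glCoeff_one]; linarith
  | succ m ih =>
    rw [glCoeff_succ, Nat.cast_succ]
    exact mul_nonpos_of_nonpos_of_nonneg ih
      (div_nonneg (by linarith [m.cast_nonneg (α := ℝ)]) (by positivity))

lemma sum_range_abs_glCoeff_succ_le_one {α : ℝ} (hα₀ : 0 ≤ α) (hα₁ : α ≤ 1) (m : ℕ) :
    ∑ j ∈ range m, |glCoeff α (j + 1)| ≤ 1 := by
  have hsum : ∑ j ∈ range m, |glCoeff α (j + 1)| = 1 - glCoeff (α - 1) m := by
    rw [← sum_range_glCoeff, sum_range_succ', glCoeff_zero]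
    simp only [abs_of_nonpos (glCoeff_succ_nonpos hα₀ hα₁ _), sum_neg_distrib]
    ring
  linarith [glCoeff_nonneg (by linarith : α - 1 ≤ 0) m]

lemma sum_range_abs_glCoeff_memory_le_one {α : ℝ} (hα₀ : 0 ≤ α) (hα₁ : α ≤ 1) (k : ℕ) :
    ∑ s ∈ range k, |glCoeff α (k + 1 - s)| ≤ 1 := by
  calc ∑ s ∈ range k, |glCoeff α (k + 1 - s)|
      = ∑ j ∈ range k, |glCoeff α (j + 2)| := by
        rw [← sum_range_reflect]
        exact sum_congr rfl fun j hj => by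
          congr 2
          have := mem_range.1 hj
          omega
    _ ≤ ∑ j ∈ range (k + 1), |glCoeff α (j + 1)| := by
        rw [sum_range_succ']
        exact le_add_of_nonneg_right (abs_nonneg _)
    _ ≤ 1 := sum_range_abs_glCoeff_succ_le_one hα₀ hα₁ (k + 1)

lemma sum_mul_add_one_sub_sum_mul_le {ι : Type*} {s : Finset ι} {w y : ι → ℝ} {z M : ℝ}
    (hw₀ : ∀ j ∈ s, 0 ≤ w j) (hw₁ : ∑ j ∈ s, w j ≤ 1) (hy : ∀ j ∈ s, y j ≤ M) (hz : z ≤ M) :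
    ∑ j ∈ s, w j * y j + (1 - ∑ j ∈ s, w j) * z ≤ M := by
  have hwy : ∑ j ∈ s, w j * y j ≤ (∑ j ∈ s, w j) * M := by
    rw [sum_mul]
    exact sum_le_sum fun j hj => mul_le_mul_of_nonneg_left (hy j hj) (hw₀ j hj)
  nlinarith [mul_le_mul_of_nonneg_left hz (sub_nonneg.2 hw₁)]

lemma sum_erase_div_card_add_le {ι : Type*} [DecidableEq ι] {s : Finset ι} {i : ι}
    {y : ι → ℝ} {t M : ℝ} (hi : i ∈ s) (hy : ∀ j ∈ s, y j ≤ M) (ht : t ≤ M) :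
    (∑ j ∈ s.erase i, y j) / #s + 1 / #s * t ≤ M := by
  have hcard : (0 : ℝ) < #s := by exact_mod_cast card_pos.2 ⟨i, hi⟩
  have herase : ∑ j ∈ s.erase i, y j ≤ (#s - 1) * M := by
    calc ∑ j ∈ s.erase i, y j ≤ ∑ _j ∈ s.erase i, M :=
          sum_le_sum fun j hj => hy j (mem_of_mem_erase hj)
      _ = (#s - 1) * M := by
          rw [sum_const, nsmul_eq_mul, card_erase_of_mem hi, Nat.cast_pred (card_pos.2 ⟨i, hi⟩)]
  calc (∑ j ∈ s.erase i, y j) / #s + 1 / #s * t = (∑ j ∈ s.erase i, y j + t) / #s := by ring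
    _ ≤ M := by rw [div_le_iff₀ hcard]; linarith

lemma mem_nbr_self {n : ℕ} {ε : ℝ} (hε : 0 ≤ ε) (x : ℕ → Fin n → ℝ) (k : ℕ) (i : Fin n) :
    i ∈ nbr ε x k i := by
  simpa [nbr] using hε

lemma IsFracHK.le_of_forall_le {n : ℕ} {ε α M : ℝ} {x : ℕ → Fin n → ℝ} (hdyn : IsFracHK ε α x)
    (hε : 0 ≤ ε) (hα₀ : 0 ≤ α) (hα₁ : α ≤ 1) {k : ℕ} (hM : ∀ s ≤ k, ∀ j, x s j ≤ M) (i : Fin n) :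
    x (k + 1) i ≤ M := by
  rw [hdyn k i]
  refine sum_erase_div_card_add_le (mem_nbr_self hε x k i) (fun j _ => hM k le_rfl j) ?_
  exact sum_mul_add_one_sub_sum_mul_le (fun _ _ => abs_nonneg _)
    (sum_range_abs_glCoeff_memory_le_one hα₀ hα₁ k)
    (fun s hs => hM s (mem_range.1 hs).le i) (hM k le_rfl i)

theorem fracHK_max_le_initial_general {n : ℕ} (hn : 0 < n) (ε α : ℝ)
    (hε : ε ∈ Set.Ioc (0:ℝ) 1) (hα : α ∈ Set.Ioo (0:ℝ) 1)
    (x : ℕ → Fin n → ℝ)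
    (hdyn : IsFracHK ε α x) :
    ∀ k, (Finset.univ.sup' (Finset.univ_nonempty_iff.2 ⟨⟨0, hn⟩⟩) (x k)) ≤
      Finset.univ.sup' (Finset.univ_nonempty_iff.2 ⟨⟨0, hn⟩⟩) (x 0) := by
  set M := univ.sup' (univ_nonempty_iff.2 ⟨⟨0, hn⟩⟩) (x 0)
  have hbound : ∀ k i, x k i ≤ M := by
    intro k
    induction k using Nat.strong_induction_on with
    | _ k ih =>
      match k with
      | 0 => exact fun i => le_sup' (x 0) (mem_univ i)
      | k + 1 =>
        exact hdyn.le_of_forall_le hε.1.le hα.1.le hα.2.le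
          fun s hs => ih s (Nat.lt_succ_of_le hs)
  exact fun k => sup'_le _ _ fun i _ => hbound k i

theorem fracHK_max_le_initial {n : ℕ} (hn : 0 < n) (ε α : ℝ)
    (hε : ε ∈ Set.Ioc (0:ℝ) 1) (hα : α ∈ Set.Ioo (0:ℝ) 1)
    (x : ℕ → Fin n → ℝ) (hx0 : ∀ i, x 0 i ∈ Set.Icc (0:ℝ) 1)
    (hdyn : IsFracHK ε α x) :
    ∀ k, (Finset.univ.sup' (Finset.univ_nonempty_iff.2 ⟨⟨0, hn⟩⟩) (x k)) ≤
      Finset.univ.sup' (Finset.univ_nonempty_iff.2 ⟨⟨0, hn⟩⟩) (x 0) :=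
  fracHK_max_le_initial_general hn ε α hε hα x hdyn
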